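/- Let G be an n-player reachability game on a possibly infinite arena, where player i's objective is Reach(T_i) for a target set T_i ⊆ V, and let σ' be a Nash equilibrium from a vertex v_0. Then there exists a Nash equilibrium σ from v_0 in which every strategy is finite-memory with memory size at most max{1, n − |Sat(out(σ', v_0))|} · max{1, |Visit(out(σ', v_0)) ∖ {0}|} (in particular at most n²), and such that Sat(out(σ, v_0)) = Sat(out(σ', v_0)). -/

import Mathlib

/-!
Every player follows one Mealy machine that retraces the equilibrium outcome `π`. Cut `π` into
phases at the first visits of the targets; inside a phase the machine moves from each vertex to
the successor of its last occurrence in that phase, so it only has to remember the current phase,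
and it still passes through every first visit, hence satisfies exactly the players `π` satisfies.
A player who loses along `π` never enters their winning region along `π`, since from there a
deviation would win. The machine also remembers the losing player who last moved on the phase:
once the play leaves the phase, that player is the deviator, and the others keep the play outside
the deviator's winning region, which contains the deviator's target.
-/

open scoped ENNReal Classical

/-- An `n`-player arena on a (possibly infinite) directed graph: an edge relation
with no deadlocks, together with an assignment of each vertex to its owner. -/
structure Arena (V : Type) (n : ℕ) where
  E : V → V → Prop
  owner : V → Fin n
  no_deadlock : ∀ v, ∃ v', E v v'

namespace Arena

variable {V : Type} {n : ℕ}

/-- A play: an infinite sequence of vertices following edges. -/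
def IsPlay (A : Arena V n) (π : ℕ → V) : Prop := ∀ j, A.E (π j) (π (j + 1))

/-- A strategy: given the past history (the earlier vertices, oldest first) and the
current vertex, pick an `E`-successor of the current vertex. -/
structure Strategy (A : Arena V n) where
  next : List V → V → V
  valid : ∀ h v, A.E v (next h v)

/-- The list of the first `j` vertices of a play. -/
def pref (π : ℕ → V) (j : ℕ) : List V := (List.range j).map π

/-- A play is consistent with the strategy `σ` used by player `i`. -/
def Consistent (A : Arena V n) (i : Fin n) (σ : A.Strategy) (π : ℕ → V) : Prop :=
  ∀ j, A.owner (π j) = i → π (j + 1) = σ.next (pref π j) (π j)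

/-- A memoryless strategy only depends on the current vertex. -/
def Memoryless {A : Arena V n} (σ : A.Strategy) : Prop :=
  ∀ h h' v, σ.next h v = σ.next h' v

def outcomeAux (A : Arena V n) (σ : Fin n → A.Strategy) (v0 : V) : ℕ → List V × V
  | 0 => ([], v0)
  | j + 1 =>
      let p := outcomeAux A σ v0 j
      (p.1 ++ [p.2], (σ (A.owner p.2)).next p.1 p.2)

/-- The outcome of the strategy profile `σ` from `v0`: the unique play from `v0`
consistent with every strategy of the profile. -/
def outcome (A : Arena V n) (σ : Fin n → A.Strategy) (v0 : V) (j : ℕ) : V :=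
  (outcomeAux A σ v0 j).2

/-- Reachability objective: visit `T`. -/
def ReachObj (T : Set V) : Set (ℕ → V) := {π | ∃ j, π j ∈ T}

/-- Safety objective: never visit `T`. -/
def SafeObj (T : Set V) : Set (ℕ → V) := {π | ∀ j, π j ∉ T}

/-- Büchi objective: visit `T` infinitely often. -/
def BuchiObj (T : Set V) : Set (ℕ → V) := {π | ∀ j, ∃ k, j ≤ k ∧ π k ∈ T}

/-- co-Büchi objective: visit `T` only finitely often. -/
def CoBuchiObj (T : Set V) : Set (ℕ → V) := {π | ∃ j, ∀ k, j ≤ k → π k ∉ T}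

/-- Shortest-path cost of a play: the total weight up to the first visit of `T`,
and `⊤` if `T` is never visited. -/
noncomputable def spCost (w : V → V → ℕ) (T : Set V) (π : ℕ → V) : ℝ≥0∞ :=
  if ∃ k, π k ∈ T then
    (Finset.range (sInf {k | π k ∈ T})).sum fun j => (w (π j) (π (j + 1)) : ℝ≥0∞)
  else ⊤

/-- Winning region of player `p` (whose objective is `Ω`) in a two-player game:
vertices from which `p` has a strategy all of whose consistent plays lie in `Ω`. -/
def WinRegion (A : Arena V 2) (p : Fin 2) (Ω : Set (ℕ → V)) : Set V :=
  {v | ∃ σ : A.Strategy, ∀ π, A.IsPlay π → π 0 = v → A.Consistent p σ π → π ∈ Ω}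

/-- Lower value `inf_{σ₁} sup_{σ₂}` of a two-player zero-sum game with cost `c`
(minimised by player 1, maximised by player 2). -/
noncomputable def valIS (A : Arena V 2) (c : (ℕ → V) → ℝ≥0∞) (v : V) : ℝ≥0∞ :=
  ⨅ σ1 : A.Strategy, ⨆ σ2 : A.Strategy, c (outcome A ![σ1, σ2] v)

/-- Upper value `sup_{σ₂} inf_{σ₁}`. -/
noncomputable def valSI (A : Arena V 2) (c : (ℕ → V) → ℝ≥0∞) (v : V) : ℝ≥0∞ :=
  ⨆ σ2 : A.Strategy, ⨅ σ1 : A.Strategy, c (outcome A ![σ1, σ2] v)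

/-- Nash equilibrium from `v0` for cost functions (each player minimises):
no unilateral deviation decreases the deviator's cost. -/
def IsNECost (A : Arena V n) (cost : Fin n → (ℕ → V) → ℝ≥0∞)
    (σ : Fin n → A.Strategy) (v0 : V) : Prop :=
  ∀ (i : Fin n) (τ : A.Strategy),
    cost i (outcome A σ v0) ≤ cost i (outcome A (Function.update σ i τ) v0)

/-- Nash equilibrium from `v0` for objectives: if a unilateral deviation of player `i`
satisfies `Ω i`, then so does the equilibrium outcome. -/
def IsNEObj (A : Arena V n) (Ω : Fin n → Set (ℕ → V))
    (σ : Fin n → A.Strategy) (v0 : V) : Prop :=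
  ∀ (i : Fin n) (τ : A.Strategy),
    outcome A (Function.update σ i τ) v0 ∈ Ω i → outcome A σ v0 ∈ Ω i

/-- The coalition arena of player `i`: player `i` (as player `0`) against all others. -/
def coalition (A : Arena V n) (i : Fin n) : Arena V 2 where
  E := A.E
  owner := fun v => if A.owner v = i then 0 else 1
  no_deadlock := A.no_deadlock

/-- Winning region of player `i` in their coalition game for objective `Ω`. -/
def coalWin (A : Arena V n) (i : Fin n) (Ω : Set (ℕ → V)) : Set V :=
  WinRegion (coalition A i) 0 Ω

/-- Value of a vertex in player `i`'s coalition game with cost `c`. -/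
noncomputable def coalVal (A : Arena V n) (i : Fin n) (c : (ℕ → V) → ℝ≥0∞) (v : V) :
    ℝ≥0∞ :=
  valIS (coalition A i) c v

/-- Players whose reachability objective is satisfied by `π`. -/
def satReach (T : Fin n → Set V) (π : ℕ → V) : Set (Fin n) := {i | ∃ j, π j ∈ T i}

/-- Players whose safety objective is satisfied by `π`. -/
def satSafe (T : Fin n → Set V) (π : ℕ → V) : Set (Fin n) := {i | ∀ j, π j ∉ T i}

/-- Players whose Büchi objective is satisfied by `π`. -/
def satBuchi (T : Fin n → Set V) (π : ℕ → V) : Set (Fin n) :=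
  {i | ∀ j, ∃ k, j ≤ k ∧ π k ∈ T i}

/-- Players whose co-Büchi objective is satisfied by `π`. -/
def satCoBuchi (T : Fin n → Set V) (π : ℕ → V) : Set (Fin n) :=
  {i | ∃ j, ∀ k, j ≤ k → π k ∉ T i}

/-- Earliest positions at which the targets visited by `π` are first visited. -/
def visitSet (T : Fin n → Set V) (π : ℕ → V) : Set ℕ :=
  {m | ∃ i, (∃ j, π j ∈ T i) ∧ m = sInf {j | π j ∈ T i}}

/-- A Mealy machine with memory states `M`. -/
structure Mealy (A : Arena V n) (M : Type) where
  init : M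
  up : M → V → M
  nxt : M → V → V
  valid : ∀ m v, A.E v (nxt m v)

/-- The strategy `σ` is induced by the Mealy machine `mm`. -/
def InducedBy {A : Arena V n} {M : Type} (σ : A.Strategy) (mm : Mealy A M) : Prop :=
  ∀ h v, σ.next h v = mm.nxt (h.foldl mm.up mm.init) v

/-- `σ` has memory size at most `b`. -/
def HasMemorySize {A : Arena V n} (σ : A.Strategy) (b : ℕ) : Prop :=
  ∃ (M : Type) (mm : Mealy A M), Finite M ∧ Nat.card M ≤ b ∧ InducedBy σ mm

/-- `σ` is a finite-memory strategy. -/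
def FiniteMemory {A : Arena V n} (σ : A.Strategy) : Prop :=
  ∃ (M : Type) (mm : Mealy A M), Finite M ∧ InducedBy σ mm

/-- The (finite) segment of `π` between positions `a` and `b` is a simple history. -/
def SimpleSeg (π : ℕ → V) (a b : ℕ) : Prop :=
  ∀ m m', a ≤ m → m ≤ b → a ≤ m' → m' ≤ b → π m = π m' → m = m'

/-- The suffix of `π` from position `a` is a simple play. -/
def SimplePlaySeg (π : ℕ → V) (a : ℕ) : Prop :=
  ∀ m m', a ≤ m → a ≤ m' → π m = π m' → m = m'

/-- The suffix of `π` from position `a` is a simple lasso `p c^ω` with `p c`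
a simple history. -/
def SimpleLassoSeg (π : ℕ → V) (a : ℕ) : Prop :=
  ∃ k ℓ, 0 < ℓ ∧ (∀ m, a + k ≤ m → π (m + ℓ) = π m) ∧
    ∀ m m', a ≤ m → m < a + k + ℓ → a ≤ m' → m' < a + k + ℓ → π m = π m' → m = m'

/-- The segment of `π` between positions `a` and `b` is a simple cycle. -/
def SimpleCycleSeg (π : ℕ → V) (a b : ℕ) : Prop :=
  a < b ∧ π b = π a ∧
    ∀ m m', a ≤ m → m < b → a ≤ m' → m' < b → π m = π m' → m = m'

/-- Total weight of a history (a list of vertices). -/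
def histWeight (w : V → V → ℕ) : List V → ℕ
  | [] => 0
  | [_] => 0
  | a :: b :: t => w a b + histWeight w (b :: t)

/-- The list of vertices along positions `a..b` (inclusive) of a play. -/
def segList (π : ℕ → V) (a b : ℕ) : List V :=
  (List.range (b - a + 1)).map fun m => π (a + m)

/-- The segment of `π` between positions `a` and `b` has minimal weight among all
histories that share its first and last vertex and traverse only its vertices. -/
def MinWeightSeg (A : Arena V n) (w : V → V → ℕ) (π : ℕ → V) (a b : ℕ) : Prop :=
  ∀ h : List V, h ≠ [] → List.Chain' A.E h →
    h.head? = some (π a) → h.getLast? = some (π b) →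
    (∀ x ∈ h, ∃ m, a ≤ m ∧ m ≤ b ∧ π m = x) →
    histWeight w (segList π a b) ≤ histWeight w h

/-- Given cut positions `p`, segments number `l` and `l'` of `π` carry the same
vertex sequence. -/
def SegEq (π : ℕ → V) (p : ℕ → ℕ) (l l' : ℕ) : Prop :=
  p (l' + 1) - p l' = p (l + 1) - p l ∧
    ∀ m, m ≤ p (l + 1) - p l → π (p l' + m) = π (p l + m)

/-- There is no cycle of the arena using only vertices of `S` and avoiding `avoid`. -/
def NoCycleAvoid (A : Arena V n) (S : Set V) (avoid : V) : Prop :=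
  ¬ ∃ (m : ℕ) (c : ℕ → V), 0 < m ∧ (∀ j, j < m → A.E (c j) (c (j + 1))) ∧
      c m = c 0 ∧ ∀ j, j ≤ m → c j ∈ S ∧ c j ≠ avoid

lemma pref_succ (π : ℕ → V) (j : ℕ) : pref π (j + 1) = pref π j ++ [π j] := by
  simp [pref, List.range_succ]

lemma pref_succ' (π : ℕ → V) (j : ℕ) :
    pref π (j + 1) = π 0 :: pref (fun k => π (k + 1)) j := by
  simp [pref, List.range_succ_eq_map, List.map_map, Function.comp_def]

lemma length_pref (π : ℕ → V) (j : ℕ) : (pref π j).length = j := by simp [pref]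

lemma drop_pref_add (π : ℕ → V) (J j : ℕ) :
    (pref π (J + j)).drop J = pref (fun k => π (J + k)) j := by
  rw [pref, List.range_add, List.map_append, List.drop_left' (by simp), pref, List.map_map]
  rfl

variable {A : Arena V n}

lemma outcomeAux_fst (σ : Fin n → A.Strategy) (v0 : V) (j : ℕ) :
    (outcomeAux A σ v0 j).1 = pref (outcome A σ v0) j := by
  induction j with
  | zero => rfl
  | succ j ih =>
    change (outcomeAux A σ v0 j).1 ++ [(outcomeAux A σ v0 j).2] = _
    rw [ih, pref_succ]
    rfl

lemma outcome_succ (σ : Fin n → A.Strategy) (v0 : V) (j : ℕ) :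
    outcome A σ v0 (j + 1) =
      (σ (A.owner (outcome A σ v0 j))).next (pref (outcome A σ v0) j) (outcome A σ v0 j) := by
  change (outcomeAux A σ v0 (j + 1)).2 = _
  rw [outcomeAux, ← outcomeAux_fst]
  rfl

lemma outcome_isPlay (σ : Fin n → A.Strategy) (v0 : V) : A.IsPlay (outcome A σ v0) := by
  intro j
  rw [outcome_succ]
  exact (σ _).valid _ _

lemma outcome_update_eq_of_le {σ : Fin n → A.Strategy} {i : Fin n} {τ : A.Strategy} {J : ℕ}
    (hτ : ∀ h v, h.length < J → τ.next h v = (σ i).next h v) (v0 : V) {j : ℕ} (hj : j ≤ J) :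
    outcome A (Function.update σ i τ) v0 j = outcome A σ v0 j := by
  suffices ∀ j ≤ J, outcomeAux A (Function.update σ i τ) v0 j = outcomeAux A σ v0 j from
    congrArg Prod.snd (this j hj)
  intro j hj
  induction j with
  | zero => rfl
  | succ j ih =>
    change (_, _) = (_, _)
    rw [ih (by omega)]
    congr 1
    by_cases hown : A.owner (outcomeAux A σ v0 j).2 = i
    · rw [hown, Function.update_self, hτ _ _ (by rw [outcomeAux_fst, length_pref]; omega)]
    · rw [Function.update_of_ne hown]

def Mealy.memory {M : Type} (mm : Mealy A M) (h : List V) : M := h.foldl mm.up mm.init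

lemma Mealy.memory_pref_succ {M : Type} (mm : Mealy A M) (π : ℕ → V) (k : ℕ) :
    mm.memory (pref π (k + 1)) = mm.up (mm.memory (pref π k)) (π k) := by
  rw [Mealy.memory, pref_succ, List.foldl_append]
  rfl

def Mealy.strategy {M : Type} (mm : Mealy A M) : A.Strategy :=
  ⟨fun h v => mm.nxt (mm.memory h) v, fun _ _ => mm.valid _ _⟩

lemma Mealy.hasMemorySize_strategy {M : Type} [Finite M] (mm : Mealy A M) {b : ℕ}
    (hb : Nat.card M ≤ b) : HasMemorySize mm.strategy b :=
  ⟨M, mm, inferInstance, hb, fun _ _ => rfl⟩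

lemma outcome_succ_of_eq_strategy {M : Type} {mm : Mealy A M} {σ : Fin n → A.Strategy}
    {v0 : V} {k : ℕ} (hk : σ (A.owner (outcome A σ v0 k)) = mm.strategy) :
    outcome A σ v0 (k + 1) =
      mm.nxt (mm.memory (pref (outcome A σ v0) k)) (outcome A σ v0 k) := by
  rw [outcome_succ, hk]
  rfl

noncomputable def anyStrategy (A : Arena V n) : A.Strategy :=
  ⟨fun _ v => (A.no_deadlock v).choose, fun _ v => (A.no_deadlock v).choose_spec⟩

/-- After the first move, `τ w` is played on the history without its first vertex, `w` being the
second vertex of the play. -/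
def Strategy.afterFirst (f : V → V) (hf : ∀ v, A.E v (f v)) (τ : V → A.Strategy) :
    A.Strategy where
  next h u := match h with
    | [] => f u
    | _ :: h' => (τ (h'.headD u)).next h' u
  valid h u := by cases h <;> simp only [hf, Strategy.valid]

lemma consistent_afterFirst {p : Fin n} {f : V → V} {hf : ∀ v, A.E v (f v)}
    {τ : V → A.Strategy} {π : ℕ → V} (hπ : A.Consistent p (Strategy.afterFirst f hf τ) π) :
    (A.owner (π 0) = p → π 1 = f (π 0)) ∧ A.Consistent p (τ (π 1)) (fun k => π (k + 1)) := by
  refine ⟨hπ 0, fun j hj => ?_⟩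
  have hhead : (pref (fun k => π (k + 1)) j).headD (π (j + 1)) = π 1 := by
    cases j <;> simp [pref, List.range_succ_eq_map]
  change π (j + 1 + 1) = _
  rw [hπ (j + 1) hj, pref_succ']
  simp only [Strategy.afterFirst, hhead]

section WinRegion

variable {B : Arena V 2} {p : Fin 2} {T : Set V}

lemma subset_winRegion_reachObj : T ⊆ WinRegion B p (ReachObj T) :=
  fun _ hv => ⟨anyStrategy B, fun _ _ h0 _ => ⟨0, h0 ▸ hv⟩⟩

lemma mem_winRegion_reachObj_of_edge {v w : V} (hv : B.owner v = p) (hvw : B.E v w)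
    (hw : w ∈ WinRegion B p (ReachObj T)) : v ∈ WinRegion B p (ReachObj T) := by
  obtain ⟨τ, hτ⟩ := hw
  let f u := if B.E u w then w else (anyStrategy B).next [] u
  have hf : ∀ u, B.E u (f u) := fun u => by
    by_cases h : B.E u w <;> simp only [f, h, if_true, if_false, Strategy.valid]
  refine ⟨Strategy.afterFirst f hf fun _ => τ, fun π hπ h0 hcons => ?_⟩
  obtain ⟨hfirst, hrest⟩ := consistent_afterFirst hcons
  have h1 : π 1 = w := by rw [hfirst (h0 ▸ hv), h0]; simp [f, hvw]
  obtain ⟨k, hk⟩ := hτ _ (fun j => hπ (j + 1)) h1 hrest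
  exact ⟨k + 1, hk⟩

lemma mem_winRegion_reachObj_of_forall_edge {v : V}
    (hall : ∀ w, B.E v w → w ∈ WinRegion B p (ReachObj T)) :
    v ∈ WinRegion B p (ReachObj T) := by
  let τ w : B.Strategy :=
    if h : w ∈ WinRegion B p (ReachObj T) then h.choose else anyStrategy B
  refine ⟨Strategy.afterFirst _ ((anyStrategy B).valid []) τ, fun π hπ h0 hcons => ?_⟩
  have h1 : π 1 ∈ WinRegion B p (ReachObj T) := hall _ (h0 ▸ hπ 0)
  have hτ1 : τ (π 1) = h1.choose := dif_pos h1
  obtain ⟨k, hk⟩ := h1.choose_spec _ (fun j => hπ (j + 1)) rfl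
    (hτ1 ▸ (consistent_afterFirst hcons).2)
  exact ⟨k + 1, hk⟩

lemma exists_edge_not_mem_winRegion_reachObj {v : V}
    (hv : v ∉ WinRegion B p (ReachObj T)) : ∃ w, B.E v w ∧ w ∉ WinRegion B p (ReachObj T) := by
  by_contra! hall
  exact hv (mem_winRegion_reachObj_of_forall_edge hall)

end WinRegion

lemma coalition_owner_eq_zero {A : Arena V n} {i : Fin n} {v : V} :
    (coalition A i).owner v = 0 ↔ A.owner v = i := by
  simp [coalition]

/-- Move along an edge leaving `W` whenever there is one. -/
noncomputable def avoidStep (A : Arena V n) (W : Set V) (v : V) : V :=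
  if h : ∃ w, A.E v w ∧ w ∉ W then h.choose else (A.no_deadlock v).choose

lemma edge_avoidStep (W : Set V) (v : V) : A.E v (avoidStep A W v) := by
  unfold avoidStep
  split_ifs with h
  exacts [h.choose_spec.1, (A.no_deadlock v).choose_spec]

lemma avoidStep_not_mem {W : Set V} {v : V} (h : ∃ w, A.E v w ∧ w ∉ W) :
    avoidStep A W v ∉ W := by
  rw [avoidStep, dif_pos h]
  exact h.choose_spec.2

def Strategy.switchAt (σ τ : A.Strategy) (J : ℕ) : A.Strategy where
  next h u := if h.length < J then σ.next h u else τ.next (h.drop J) u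
  valid h u := by split_ifs <;> apply Strategy.valid

lemma IsNEObj.outcome_not_mem_coalWin {T : Fin n → Set V} {σ' : Fin n → A.Strategy} {v0 : V}
    (hNE : A.IsNEObj (fun i => ReachObj (T i)) σ' v0) {i : Fin n}
    (hi : i ∉ satReach T (outcome A σ' v0)) (J : ℕ) :
    outcome A σ' v0 J ∉ coalWin A i (ReachObj (T i)) := by
  rintro ⟨τ0, hτ0⟩
  let τ := Strategy.switchAt (σ' i) ⟨τ0.next, τ0.valid⟩ J
  set μ := outcome A (Function.update σ' i τ) v0
  have hμJ : μ J = outcome A σ' v0 J :=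
    outcome_update_eq_of_le (fun _ _ hh => if_pos hh) v0 le_rfl
  have hcons : (coalition A i).Consistent 0 τ0 (fun k => μ (J + k)) := by
    intro j hj
    rw [coalition_owner_eq_zero] at hj
    change μ (J + j + 1) = _
    rw [show μ (J + j + 1) = _ from outcome_succ _ v0 (J + j), hj, Function.update_self]
    change (if _ < J then _ else _) = _
    rw [length_pref, if_neg (by omega), drop_pref_add]
  obtain ⟨k, hk⟩ := hτ0 _ (fun j => outcome_isPlay (Function.update σ' i τ) v0 (J + j)) hμJ hcons
  exact hi (hNE i τ ⟨J + k, hk⟩)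

section Phases

variable (T : Fin n → Set V) (π : ℕ → V)

lemma visitSet_subset_range : visitSet T π ⊆ Set.range fun i => sInf {j | π j ∈ T i} := by
  rintro m ⟨i, -, rfl⟩
  exact ⟨i, rfl⟩

lemma finite_visitSet : (visitSet T π).Finite :=
  (Set.finite_range _).subset (visitSet_subset_range T π)

noncomputable def visitCuts : Finset ℕ := ((finite_visitSet T π).sdiff (t := {0})).toFinset

lemma mem_visitCuts {d : ℕ} : d ∈ visitCuts T π ↔ d ∈ visitSet T π \ {0} :=
  Set.Finite.mem_toFinset _

lemma ncard_visitSet_diff_zero : (visitSet T π \ {0}).ncard = (visitCuts T π).card :=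
  Set.ncard_eq_toFinset_card _ _

lemma card_visitCuts_le : (visitCuts T π).card ≤ n := by
  calc (visitCuts T π).card
      ≤ (Finset.univ.image fun i : Fin n => sInf {j | π j ∈ T i}).card := by
        refine Finset.card_le_card fun d hd => ?_
        obtain ⟨i, hi⟩ := visitSet_subset_range T π ((mem_visitCuts T π).1 hd).1
        exact Finset.mem_image.2 ⟨i, Finset.mem_univ _, hi⟩
    _ ≤ n := Finset.card_image_le.trans_eq (Finset.card_fin n)

/-- `cut 0 = 0`, and `cut (l + 1)` is the `l`-th smallest element of `visitCuts` (junk `0` past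
the last one). -/
noncomputable def cut : ℕ → ℕ
  | 0 => 0
  | l + 1 => if h : l < (visitCuts T π).card then (visitCuts T π).orderEmbOfFin rfl ⟨l, h⟩ else 0

variable {T π}

lemma cut_succ_mem_visitCuts {l : ℕ} (hl : l < (visitCuts T π).card) :
    cut T π (l + 1) ∈ visitCuts T π := by
  rw [cut, dif_pos hl]
  exact Finset.orderEmbOfFin_mem _ _ _

lemma cut_lt_cut_succ {l : ℕ} (hl : l < (visitCuts T π).card) : cut T π l < cut T π (l + 1) := by
  cases l with
  | zero =>
    have := ((mem_visitCuts T π).1 (cut_succ_mem_visitCuts hl)).2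
    exact Nat.pos_of_ne_zero this
  | succ l =>
    rw [cut, cut, dif_pos (by omega), dif_pos hl]
    exact (Finset.orderEmbOfFin _ rfl).strictMono (Fin.mk_lt_mk.2 (Nat.lt_succ_self l))

lemma exists_cut_succ_eq {d : ℕ} (hd : d ∈ visitCuts T π) :
    ∃ l < (visitCuts T π).card, cut T π (l + 1) = d := by
  rw [← Finset.mem_coe, ← Finset.range_orderEmbOfFin _ rfl] at hd
  obtain ⟨⟨l, hl⟩, rfl⟩ := hd
  exact ⟨l, hl, by rw [cut, dif_pos hl]⟩

variable (T π)

/-- The phases `0, …, numPhases - 1`; phase `l` runs from `cut l` to `cut (l + 1)`, except the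
last one, which never ends. -/
noncomputable def numPhases : ℕ := max 1 (visitCuts T π).card

lemma numPhases_pos : 0 < numPhases T π := lt_max_of_lt_left one_pos

def InPhase (l : ℕ) (v : V) : Prop :=
  ∃ j, π j = v ∧ cut T π l ≤ j ∧ (l + 1 < numPhases T π → j ≤ cut T π (l + 1))

def phaseOcc (l : ℕ) (v : V) : Set ℕ := {j | π j = v ∧ cut T π l ≤ j ∧ j ≤ cut T π (l + 1)}

-- The second branch only matters in the last phase, which is unbounded.
noncomputable def exitPos (l : ℕ) (v : V) : ℕ :=
  if (phaseOcc T π l v).Nonempty then sSup (phaseOcc T π l v)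
  else sInf {j | π j = v ∧ cut T π l ≤ j}

noncomputable def nextPhase (l : ℕ) (v : V) : ℕ :=
  if l + 1 < numPhases T π ∧ v = π (cut T π (l + 1)) then l + 1 else l

variable {T π}

lemma inPhase_zero : InPhase T π 0 (π 0) := ⟨0, rfl, le_rfl, fun _ => Nat.zero_le _⟩

lemma lt_card_visitCuts {l : ℕ} (h : l + 1 < numPhases T π) : l + 1 < (visitCuts T π).card := by
  rw [numPhases] at h
  omega

lemma nextPhase_lt {l : ℕ} (hl : l < numPhases T π) (v : V) :
    nextPhase T π l v < numPhases T π := by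
  unfold nextPhase
  split_ifs with h
  exacts [h.1, hl]

lemma bddAbove_phaseOcc (l : ℕ) (v : V) : BddAbove (phaseOcc T π l v) :=
  ⟨cut T π (l + 1), fun _ hj => hj.2.2⟩

lemma exitPos_mem_phaseOcc {l : ℕ} {v : V} (h : (phaseOcc T π l v).Nonempty) :
    exitPos T π l v ∈ phaseOcc T π l v := by
  rw [exitPos, if_pos h]
  exact Nat.sSup_mem h (bddAbove_phaseOcc l v)

lemma le_exitPos {l j : ℕ} {v : V} (hj : j ∈ phaseOcc T π l v) : j ≤ exitPos T π l v := by
  rw [exitPos, if_pos ⟨j, hj⟩]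
  exact le_csSup (bddAbove_phaseOcc l v) hj

lemma exitPos_spec {l : ℕ} {v : V} (h : InPhase T π l v) :
    π (exitPos T π l v) = v ∧ cut T π l ≤ exitPos T π l v ∧
      (l + 1 < numPhases T π → exitPos T π l v ≤ cut T π (l + 1)) := by
  by_cases hne : (phaseOcc T π l v).Nonempty
  · obtain ⟨h1, h2, h3⟩ := exitPos_mem_phaseOcc hne
    exact ⟨h1, h2, fun _ => h3⟩
  · obtain ⟨j, hj, hjl, hju⟩ := h
    rw [exitPos, if_neg hne]
    obtain ⟨h1, h2⟩ := Nat.sInf_mem (s := {j | π j = v ∧ cut T π l ≤ j}) ⟨j, hj, hjl⟩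
    exact ⟨h1, h2, fun hl => absurd ⟨j, hj, hjl, hju hl⟩ hne⟩

lemma exitPos_cut_succ {l : ℕ} (hl : l < (visitCuts T π).card) :
    exitPos T π l (π (cut T π (l + 1))) = cut T π (l + 1) := by
  have hmem : cut T π (l + 1) ∈ phaseOcc T π l (π (cut T π (l + 1))) :=
    ⟨rfl, (cut_lt_cut_succ hl).le, le_rfl⟩
  exact le_antisymm (exitPos_mem_phaseOcc ⟨_, hmem⟩).2.2 (le_exitPos hmem)

lemma inPhase_nextPhase {l : ℕ} {v : V} (h : InPhase T π l v) :
    InPhase T π (nextPhase T π l v) (π (exitPos T π l v + 1)) := by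
  obtain ⟨hπe, hle, hge⟩ := exitPos_spec h
  unfold nextPhase
  split_ifs with hnext
  · obtain ⟨hl, rfl⟩ := hnext
    have hcard := lt_card_visitCuts hl
    rw [exitPos_cut_succ (by omega)]
    refine ⟨_, rfl, Nat.le_succ _, fun hl' => ?_⟩
    exact cut_lt_cut_succ (by have := lt_card_visitCuts hl'; omega)
  · refine ⟨_, rfl, by omega, fun hl => ?_⟩
    have : exitPos T π l v ≠ cut T π (l + 1) := fun heq => hnext ⟨hl, by rw [← heq, hπe]⟩
    have := hge hl
    omega

end Phases

/-- `ℓ k` is the phase of `ρ` at step `k`; jumping past exit positions cuts out the cycles of `π`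
inside a phase. -/
structure PhaseFollower (T : Fin n → Set V) (π ρ : ℕ → V) (ℓ : ℕ → ℕ) : Prop where
  zero : ρ 0 = π 0
  phase_zero : ℓ 0 = 0
  succ : ∀ k, InPhase T π (ℓ k) (ρ k) → ρ (k + 1) = π (exitPos T π (ℓ k) (ρ k) + 1)
  phase_succ : ∀ k, ℓ (k + 1) = nextPhase T π (ℓ k) (ρ k)

namespace PhaseFollower

variable {T : Fin n → Set V} {π ρ : ℕ → V} {ℓ : ℕ → ℕ}

lemma inPhase (hρ : PhaseFollower T π ρ ℓ) (k : ℕ) : InPhase T π (ℓ k) (ρ k) := by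
  induction k with
  | zero =>
    rw [hρ.zero, hρ.phase_zero]
    exact inPhase_zero
  | succ k ih =>
    rw [hρ.succ k ih, hρ.phase_succ]
    exact inPhase_nextPhase ih

-- Each step strictly increases the position of the follower in the window of phase `m`.
lemma exists_eq_cut_succ_of_mem_phaseOcc (hρ : PhaseFollower T π ρ ℓ) {m : ℕ}
    (hm : m < (visitCuts T π).card) {k p : ℕ} (hℓ : ℓ k = m) (hp : p ∈ phaseOcc T π m (ρ k)) :
    ∃ k', ℓ k' = m ∧ ρ k' = π (cut T π (m + 1)) := by
  induction hd : cut T π (m + 1) - p using Nat.strong_induction_on generalizing k p with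
  | _ d ih =>
  have hps := le_exitPos hp
  obtain ⟨hsv, hsl, hsu⟩ := exitPos_mem_phaseOcc ⟨p, hp⟩
  rcases hsu.eq_or_lt with hs | hs
  · exact ⟨k, hℓ, by rw [← hs, hsv]⟩
  have hρk : ρ k ≠ π (cut T π (m + 1)) := fun h => by
    have := le_exitPos (⟨h.symm, (cut_lt_cut_succ hm).le, le_rfl⟩ : _ ∈ phaseOcc T π m (ρ k))
    omega
  have hℓ1 : ℓ (k + 1) = m := by
    rw [hρ.phase_succ, hℓ, nextPhase, if_neg fun h => hρk h.2]
  have hρ1 : ρ (k + 1) = π (exitPos T π m (ρ k) + 1) := by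
    rw [hρ.succ k (hρ.inPhase k), hℓ]
  exact ih _ (by omega) hℓ1 ⟨hρ1.symm, by omega, hs⟩ rfl

lemma exists_eq_cut_succ (hρ : PhaseFollower T π ρ ℓ) :
    ∀ m < (visitCuts T π).card, ∃ k, ℓ k = m ∧ ρ k = π (cut T π (m + 1))
  | 0, h0 => hρ.exists_eq_cut_succ_of_mem_phaseOcc h0 hρ.phase_zero
      ⟨hρ.zero.symm, le_rfl, Nat.zero_le _⟩
  | m + 1, hm => by
    obtain ⟨k, hℓ, hρk⟩ := exists_eq_cut_succ hρ m (by omega)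
    have hℓ1 : ℓ (k + 1) = m + 1 := by
      have : m + 1 < numPhases T π := lt_max_of_lt_right hm
      rw [hρ.phase_succ, hℓ, nextPhase, if_pos ⟨this, hρk⟩]
    have hρ1 : ρ (k + 1) = π (cut T π (m + 1) + 1) := by
      rw [hρ.succ k (hρ.inPhase k), hℓ, hρk, exitPos_cut_succ (by omega)]
    exact hρ.exists_eq_cut_succ_of_mem_phaseOcc hm hℓ1
      ⟨hρ1.symm, Nat.le_succ _, cut_lt_cut_succ hm⟩

lemma satReach_eq (hρ : PhaseFollower T π ρ ℓ) : satReach T ρ = satReach T π := by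
  refine Set.Subset.antisymm (fun i ⟨k, hk⟩ => ?_) (fun i hi => ?_)
  · obtain ⟨j, hj, -⟩ := hρ.inPhase k
    exact ⟨j, hj ▸ hk⟩
  · have hfirst : π (sInf {j | π j ∈ T i}) ∈ T i := Nat.sInf_mem hi
    by_cases h0 : sInf {j | π j ∈ T i} = 0
    · exact ⟨0, by rw [hρ.zero, ← h0]; exact hfirst⟩
    · have hcut : sInf {j | π j ∈ T i} ∈ visitCuts T π :=
        (mem_visitCuts T π).2 ⟨⟨i, hi, rfl⟩, h0⟩
      obtain ⟨m, hm, hcm⟩ := exists_cut_succ_eq hcut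
      obtain ⟨k, -, hk⟩ := hρ.exists_eq_cut_succ m hm
      exact ⟨k, by rw [hk, hcm]; exact hfirst⟩

end PhaseFollower

section Machine

variable (A : Arena V n) (T : Fin n → Set V) (π : ℕ → V) {K : Type} (code : Fin n → K)
  (decode : K → Fin n)

/-- Memory: the code of the last player who moved from a vertex of the current phase while
losing along `π`, and the current phase. -/
noncomputable def followMachine (hπ : A.IsPlay π) : Mealy A (K × Fin (numPhases T π)) where
  init := (code (A.owner (π 0)), ⟨0, numPhases_pos T π⟩)
  up m v := (if InPhase T π m.2 v ∧ A.owner v ∉ satReach T π then code (A.owner v) else m.1,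
    ⟨nextPhase T π m.2 v, nextPhase_lt m.2.2 v⟩)
  nxt m v := if InPhase T π m.2 v then π (exitPos T π m.2 v + 1)
    else avoidStep A (coalWin A (decode m.1) (ReachObj (T (decode m.1)))) v
  valid m v := by
    split_ifs with h
    · simpa only [(exitPos_spec h).1] using hπ (exitPos T π m.2 v)
    · exact edge_avoidStep _ v

lemma followMachine_nxt (hπ : A.IsPlay π) (m : K × Fin (numPhases T π)) (v : V) :
    (followMachine A T π code decode hπ).nxt m v =
      if InPhase T π m.2 v then π (exitPos T π m.2 v + 1)
      else avoidStep A (coalWin A (decode m.1) (ReachObj (T (decode m.1)))) v := rfl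

lemma followMachine_up (hπ : A.IsPlay π) (m : K × Fin (numPhases T π)) (v : V) :
    (followMachine A T π code decode hπ).up m v =
      (if InPhase T π m.2 v ∧ A.owner v ∉ satReach T π then code (A.owner v) else m.1,
        ⟨nextPhase T π m.2 v, nextPhase_lt m.2.2 v⟩) := rfl

def Punishes (i : Fin n) (m : K × Fin (numPhases T π)) (v : V) : Prop :=
  v ∉ coalWin A i (ReachObj (T i)) ∧ (¬ InPhase T π m.2 v → decode m.1 = i)

variable {A T π code decode}

lemma exists_phaseFollower_outcome_followMachine (hπ : A.IsPlay π) :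
    ∃ ℓ, PhaseFollower T π
      (outcome A (fun _ => (followMachine A T π code decode hπ).strategy) (π 0)) ℓ :=
  ⟨_, { zero := rfl
        phase_zero := rfl
        succ := fun k hk => by
          rw [outcome_succ_of_eq_strategy rfl, followMachine_nxt, if_pos hk]
        phase_succ := fun k => by rw [Mealy.memory_pref_succ, followMachine_up] }⟩

lemma Punishes.up_of_owner_eq (hπ : A.IsPlay π)
    (hdec : ∀ i ∉ satReach T π, decode (code i) = i) {i : Fin n} (hi : i ∉ satReach T π)
    {m : K × Fin (numPhases T π)} {v w : V} (h : Punishes A T π decode i m v)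
    (hown : A.owner v = i) (hvw : A.E v w) :
    Punishes A T π decode i ((followMachine A T π code decode hπ).up m v) w := by
  refine ⟨fun hw => h.1 (mem_winRegion_reachObj_of_edge (coalition_owner_eq_zero.2 hown) hvw hw),
    fun _ => ?_⟩
  rw [followMachine_up]
  split_ifs with hin
  · rw [hown, hdec i hi]
  · exact h.2 fun hv => hin ⟨hv, hown ▸ hi⟩

lemma Punishes.up_nxt (hπ : A.IsPlay π)
    (hW : ∀ i ∉ satReach T π, ∀ j, π j ∉ coalWin A i (ReachObj (T i))) {i : Fin n}
    (hi : i ∉ satReach T π) {m : K × Fin (numPhases T π)} {v : V}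
    (h : Punishes A T π decode i m v) :
    Punishes A T π decode i ((followMachine A T π code decode hπ).up m v)
      ((followMachine A T π code decode hπ).nxt m v) := by
  rw [followMachine_nxt, followMachine_up]
  by_cases hin : InPhase T π m.2 v
  · rw [if_pos hin]
    exact ⟨hW i hi _, fun hout => absurd (inPhase_nextPhase hin) hout⟩
  · have hdec := h.2 hin
    rw [if_neg hin, if_neg fun h' => hin h'.1, hdec]
    exact ⟨avoidStep_not_mem (exists_edge_not_mem_winRegion_reachObj h.1), fun _ => hdec⟩

theorem isNEObj_followMachine (hπ : A.IsPlay π)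
    (hW : ∀ i ∉ satReach T π, ∀ j, π j ∉ coalWin A i (ReachObj (T i)))
    (hdec : ∀ i ∉ satReach T π, decode (code i) = i) :
    A.IsNEObj (fun i => ReachObj (T i))
      (fun _ => (followMachine A T π code decode hπ).strategy) (π 0) := by
  intro i τ hdev
  by_cases hi : i ∈ satReach T π
  · obtain ⟨ℓ, hρ⟩ := exists_phaseFollower_outcome_followMachine (code := code)
      (decode := decode) hπ
    rwa [← hρ.satReach_eq] at hi
  set mm := followMachine A T π code decode hπ
  set μ := outcome A (Function.update (fun _ => mm.strategy) i τ) (π 0)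
  have hinv : ∀ k, Punishes A T π decode i (mm.memory (pref μ k)) (μ k) := by
    intro k
    induction k with
    | zero => exact ⟨hW i hi 0, fun h => absurd inPhase_zero h⟩
    | succ k ih =>
      rw [mm.memory_pref_succ]
      by_cases hown : A.owner (μ k) = i
      · exact ih.up_of_owner_eq hπ hdec hi hown (outcome_isPlay _ _ k)
      · rw [show μ (k + 1) = _ from outcome_succ_of_eq_strategy (Function.update_of_ne hown _ _)]
        exact ih.up_nxt hπ hW hi
  obtain ⟨j, hj⟩ := hdev
  exact ((hinv j).1 (subset_winRegion_reachObj hj)).elim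

end Machine

lemma exists_injOn_fin {α : Type} [Finite α] (s : Set α) {d : ℕ} (hd : 0 < d)
    (h : s.ncard ≤ d) : ∃ f : α → Fin d, Set.InjOn f s := by
  have : Nonempty (Fin d) := ⟨⟨0, hd⟩⟩
  obtain ⟨f, -, hf⟩ := s.toFinite.exists_injOn_of_encard_le (t := Set.univ) (by
    rw [← s.toFinite.cast_ncard_eq, Set.encard_univ, ENat.card_eq_coe_fintype_card (α := Fin d),
      Fintype.card_fin]
    exact_mod_cast h)
  exact ⟨f, hf⟩

end Arena

open Arena

/-- From any NE in a reachability game one can derive a finite-memory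
NE with the same set of satisfied objectives; memory size at most
`max 1 (n − |Sat|) * max 1 |Visit ∖ {0}|`, in particular at most `n²`. -/
theorem reach_fm_ne
    (V : Type) (n : ℕ) (A : Arena V n) (T : Fin n → Set V) (v0 : V)
    (σ' : Fin n → A.Strategy)
    (hNE : A.IsNEObj (fun i => ReachObj (T i)) σ' v0) :
    ∃ σ : Fin n → A.Strategy,
      A.IsNEObj (fun i => ReachObj (T i)) σ v0 ∧
      satReach T (outcome A σ v0) = satReach T (outcome A σ' v0) ∧
      ∀ i, HasMemorySize (σ i)
          (max 1 (n - (satReach T (outcome A σ' v0)).ncard) *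
            max 1 ((visitSet T (outcome A σ' v0) \ {0}).ncard)) ∧
        HasMemorySize (σ i) (n ^ 2) := by
  set π := outcome A σ' v0
  have hπ : A.IsPlay π := outcome_isPlay σ' v0
  have hn : 0 < n := (A.owner v0).pos
  have : Nonempty (Fin n) := ⟨A.owner v0⟩
  set d := max 1 (n - (satReach T π).ncard)
  obtain ⟨code, hcode⟩ := exists_injOn_fin (satReach T π)ᶜ (d := d) (lt_max_of_lt_left one_pos)
    (by rw [Set.ncard_compl, Nat.card_eq_fintype_card, Fintype.card_fin]; exact le_max_right _ _)
  set decode := Function.invFunOn code (satReach T π)ᶜ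
  set mm := followMachine A T π code decode hπ
  obtain ⟨ℓ, hρ⟩ := exists_phaseFollower_outcome_followMachine (code := code) (decode := decode) hπ
  have hcard : Nat.card (Fin d × Fin (numPhases T π)) = d * max 1 (visitSet T π \ {0}).ncard := by
    rw [Nat.card_prod, Nat.card_fin, Nat.card_fin, numPhases, ncard_visitSet_diff_zero]
  have hsq : d * max 1 (visitSet T π \ {0}).ncard ≤ n ^ 2 := by
    rw [sq, ncard_visitSet_diff_zero]
    exact Nat.mul_le_mul (max_le hn (Nat.sub_le _ _)) (max_le hn (card_visitCuts_le T π))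
  refine ⟨fun _ => mm.strategy,
    isNEObj_followMachine hπ (fun i hi => hNE.outcome_not_mem_coalWin hi)
      (fun i hi => hcode.leftInvOn_invFunOn hi),
    hρ.satReach_eq, fun _ => ⟨mm.hasMemorySize_strategy hcard.le,
      mm.hasMemorySize_strategy (hcard.trans_le hsq)⟩⟩
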